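/- Let T = V^ω be a right infinite periodic word with minimal period d, over a finite alphabet, and let Y₁,…,Y_d be the d distinct subwords of T of length d. In the monomial algebra A_T (basis the subwords of T), the element Z = Y₁ + ⋯ + Y_d is central, the products satisfy Y_iY_j = 0 in A_T for i ≠ j, and Y_i² = Y_i Z = Z Y_i for each i. -/
import Mathlib

/-- The factor (subword) of the right infinite word `W` starting at position `i`, of length `n`. -/
def FactorAt {X : Type*} (W : ℕ → X) (i n : ℕ) : List X :=
  (List.range n).map fun k => W (i + k)

/-- The finite word `u` occurs in `W` at position `i`. -/
def OccursAt {X : Type*} (W : ℕ → X) (u : List X) (i : ℕ) : Prop :=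
  FactorAt W i u.length = u

/-- `u` is a (finite) subword of the right infinite word `W`. -/
def IsFactor {X : Type*} (W : ℕ → X) (u : List X) : Prop :=
  ∃ i, OccursAt W u i

/-- A right infinite word is prime if every finite subword occurs infinitely often. -/
def IsPrimeWord {X : Type*} (W : ℕ → X) : Prop :=
  ∀ u, IsFactor W u → ∀ N, ∃ i, N ≤ i ∧ OccursAt W u i

/-- `W` is ultimately periodic. -/
def UltPeriodic {X : Type*} (W : ℕ → X) : Prop :=
  ∃ N p, 1 ≤ p ∧ ∀ i, N ≤ i → W (i + p) = W i

/-- `k`-fold concatenation power of a finite word. -/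
def wpow {X : Type*} (w : List X) (k : ℕ) : List X := (List.replicate k w).flatten

/-- The periodic right infinite word `w^ω`. -/
def perWord {X : Type*} [Inhabited X] (w : List X) : ℕ → X :=
  fun n => w.getD (n % w.length) default

/-- The right infinite word `w₁ w₂^ω`. -/
def glueWord {X : Type*} [Inhabited X] (w₁ w₂ : List X) : ℕ → X := fun n =>
  if n < w₁.length then w₁.getD n default
  else w₂.getD ((n - w₁.length) % w₂.length) default

/-- The right infinite word obtained by prefixing `U` with the finite word `w`. -/
def prependWord {X : Type*} (w : List X) (U : ℕ → X) : ℕ → X := fun n =>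
  if n < w.length then w.getD n (U 0) else U (n - w.length)

/-- The finite word `w` is a prefix of the right infinite word `U`. -/
def HasPrefixWord {X : Type*} (U : ℕ → X) (w : List X) : Prop :=
  FactorAt U 0 w.length = w


/-- The image of a finite word in the free algebra: the product of its letters. -/
noncomputable def wordToAlg (k : Type*) [CommRing k] {X : Type*} (w : List X) :
    FreeAlgebra k X :=
  (w.map (FreeAlgebra.ι k)).prod

/-- The relations defining the monomial algebra of a right infinite word `W`: every
finite word that is not a subword of `W` is set to zero. -/
def monomialRel (k : Type*) [CommRing k] {X : Type*} (W : ℕ → X) :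
    FreeAlgebra k X → FreeAlgebra k X → Prop :=
  fun a b => ∃ w : List X, ¬ IsFactor W w ∧ a = wordToAlg k w ∧ b = 0

/-- The monomial algebra `A_W` of a right infinite word `W`. -/
abbrev MonomialAlgebra (k : Type*) [CommRing k] {X : Type*} (W : ℕ → X) :=
  RingQuot (monomialRel k W)

/- ### Auxiliary lemmas -/

lemma factorAt_length {X : Type*} (W : ℕ → X) (i n : ℕ) : (FactorAt W i n).length = n := by
  simp [FactorAt]

lemma factorAt_append {X : Type*} (W : ℕ → X) (i n m : ℕ) :
    FactorAt W i (n + m) = FactorAt W i n ++ FactorAt W (i + n) m := by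
  simp [FactorAt, List.range_add, List.map_map, Function.comp, Nat.add_assoc]

lemma add_mod_mod (i m d : ℕ) : (i + m) % d = (i + m % d) % d := by
  rw [Nat.add_mod, Nat.add_mod i (m % d), Nat.mod_mod]

lemma factorAt_apply_eq {X : Type*} {W : ℕ → X} {i j n : ℕ}
    (h : FactorAt W i n = FactorAt W j n) : ∀ k < n, W (i + k) = W (j + k) := by
  intro k hk
  have := congrArg (fun l => l[k]?) h
  simpa [FactorAt, hk] using this

section per
variable {X : Type*} {T : ℕ → X} {d : ℕ} (hd : 1 ≤ d) (hper : ∀ i : ℕ, T (i + d) = T i)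

include hper in
lemma T_shift : ∀ q r, T (r + q * d) = T r := by
  intro q
  induction q with
  | zero => simp
  | succ q ih => intro r; have := hper (r + q * d); rw [Nat.succ_mul, ← Nat.add_assoc, this, ih]

include hper in
lemma T_mod (n : ℕ) : T n = T (n % d) := by
  conv_lhs => rw [← Nat.mod_add_div' n d, T_shift hper (n / d) (n % d)]

include hper in
lemma factorAt_mod (m n : ℕ) : FactorAt T m n = FactorAt T (m % d) n := by
  unfold FactorAt
  apply List.map_congr_left
  intro a _
  rw [T_mod hper (m + a), T_mod hper (m % d + a)]
  congr 1
  rw [Nat.add_comm (m % d) a, ← add_mod_mod a m d, Nat.add_comm]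

include hd hper in
lemma shifts_distinct_aux (hmin : ∀ p : ℕ, 1 ≤ p → (∀ i : ℕ, T (i + p) = T i) → d ≤ p)
    {i j : ℕ} (hj : j < d) (h : FactorAt T i d = FactorAt T j d)
    (hij : i < j) : False := by
  have key : ∀ m : ℕ, T (i + m) = T (j + m) := by
    intro m
    rw [T_mod hper (i + m), T_mod hper (j + m), add_mod_mod i m d, add_mod_mod j m d,
      ← T_mod hper (i + m % d), ← T_mod hper (j + m % d)]
    exact factorAt_apply_eq h _ (Nat.mod_lt _ (by omega))
  set p := j - i with hp
  have hp1 : 1 ≤ p := by omega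
  have hperiod : ∀ n : ℕ, T (n + p) = T n := by
    intro n
    have hle : i ≤ n + i * d := by
      calc i ≤ i * d := Nat.le_mul_of_pos_right _ (by omega)
        _ ≤ n + i * d := by omega
    set m := n + i * d - i with hm
    have h1 : n + i * d = i + m := by omega
    have h2 : n + p + i * d = j + m := by omega
    calc T (n + p) = T (n + p + i * d) := (T_shift hper i (n + p)).symm
      _ = T (j + m) := by rw [h2]
      _ = T (i + m) := (key m).symm
      _ = T (n + i * d) := by rw [h1]
      _ = T n := T_shift hper i n
  have := hmin p hp1 hperiod
  omega

include hd hper in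
lemma shifts_distinct (hmin : ∀ p : ℕ, 1 ≤ p → (∀ i : ℕ, T (i + p) = T i) → d ≤ p)
    {i j : ℕ} (hi : i < d) (hj : j < d) (h : FactorAt T i d = FactorAt T j d) : i = j := by
  rcases Nat.lt_trichotomy i j with hij | hij | hij
  · exact (shifts_distinct_aux hd hper hmin hj h hij).elim
  · exact hij
  · exact (shifts_distinct_aux hd hper hmin hi h.symm hij).elim
end per

lemma mod_pred_eq (d a : ℕ) (hd : 1 ≤ d) (ha : a < d) :
    (a + (d - 1)) % d = if a = 0 then d - 1 else a - 1 := by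
  split_ifs with h
  · subst h
    simpa using Nat.mod_eq_of_lt (by omega : d - 1 < d)
  · have h1 : a + (d - 1) = (a - 1) + d := by omega
    rw [h1, Nat.add_mod_right, Nat.mod_eq_of_lt (by omega)]

lemma pred_succ (d a : ℕ) (hd : 1 ≤ d) (ha : a < d) : ((a + (d - 1)) % d + 1) % d = a := by
  rw [mod_pred_eq d a hd ha]
  split_ifs with h
  · rw [Nat.sub_add_cancel hd, Nat.mod_self, h]
  · rw [Nat.sub_add_cancel (by omega), Nat.mod_eq_of_lt ha]

lemma succ_pred (d b : ℕ) (hd : 1 ≤ d) (hb : b < d) : ((b + 1) % d + (d - 1)) % d = b := by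
  rcases Nat.lt_or_ge (b + 1) d with h | h
  · rw [Nat.mod_eq_of_lt h]
    have h1 : b + 1 + (d - 1) = b + d := by omega
    rw [h1, Nat.add_mod_right, Nat.mod_eq_of_lt hb]
  · have hb1 : b + 1 = d := by omega
    rw [hb1, Nat.mod_self, Nat.zero_add, Nat.mod_eq_of_lt (by omega)]
    omega

/-- Let `T` be a right infinite periodic word with minimal period `d`, and let
`Y i` (for `i < d`) be the images in the monomial algebra `A_T` of the `d` distinct
length-`d` subwords of `T` (the factor starting at position `i`).  Then, with
`Z = Y 0 + ⋯ + Y (d-1)`:  `Y i * Y j = 0` for `i ≠ j`, `Y i ^ 2 = Y i * Z = Z * Y i`,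
and `Z` is central in `A_T`. -/
theorem periodic_monomial_algebra_central_element
    {k : Type*} [Field k] {X : Type*} [Fintype X]
    (T : ℕ → X) (d : ℕ) (hd : 1 ≤ d)
    (hper : ∀ i : ℕ, T (i + d) = T i)
    (hmin : ∀ p : ℕ, 1 ≤ p → (∀ i : ℕ, T (i + p) = T i) → d ≤ p)
    (Y : ℕ → MonomialAlgebra k T)
    (hY : ∀ i : ℕ, Y i = RingQuot.mkRingHom (monomialRel k T) (wordToAlg k (FactorAt T i d)))
    (Z : MonomialAlgebra k T) (hZ : Z = ∑ i ∈ Finset.range d, Y i) :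
    (∀ i < d, ∀ j < d, i ≠ j → Y i * Y j = 0) ∧
    (∀ i < d, Y i * Y i = Y i * Z ∧ Y i * Z = Z * Y i) ∧
    Z ∈ Subring.center (MonomialAlgebra k T) := by
  classical
  set mk := RingQuot.mkRingHom (monomialRel k T) with hmk
  have hzero : ∀ u : List X, ¬ IsFactor T u → mk (wordToAlg k u) = 0 := by
    intro u h
    have := RingQuot.mkRingHom_rel (r := monomialRel k T) ⟨u, h, rfl, rfl⟩
    simpa using this
  have hWmul : ∀ u v : List X,
      mk (wordToAlg k u) * mk (wordToAlg k v) = mk (wordToAlg k (u ++ v)) := by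
    intro u v
    rw [← map_mul]
    congr 1
    simp [wordToAlg]
  have hmodeq : ∀ m i, i < d → FactorAt T m d = FactorAt T i d → m % d = i := by
    intro m i hi h
    refine shifts_distinct hd hper hmin (Nat.mod_lt _ (by omega)) hi ?_
    rw [← factorAt_mod hper m d, h]
  -- Part 1
  have hprod0 : ∀ i < d, ∀ j < d, i ≠ j → Y i * Y j = 0 := by
    intro i hi j hj hij
    rw [hY i, hY j, hWmul]
    apply hzero
    rintro ⟨m, hm⟩
    simp only [OccursAt, List.length_append, factorAt_length] at hm
    rw [factorAt_append] at hm
    obtain ⟨h1, h2⟩ := List.append_inj hm (by rw [factorAt_length, factorAt_length])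
    have e1 : m % d = i := hmodeq m i hi h1
    have e2 : m % d = j := by
      refine hmodeq m j hj ?_
      rw [factorAt_mod hper m d, ← Nat.add_mod_right m d, ← factorAt_mod hper (m + d) d, h2]
    exact hij (e1 ▸ e2)
  refine ⟨hprod0, ?_, ?_⟩
  · -- Part 2
    intro i hi
    have hYZ : Y i * Z = Y i * Y i := by
      rw [hZ, Finset.mul_sum]
      refine Finset.sum_eq_single i
        (fun j hj hji => hprod0 i hi j (Finset.mem_range.mp hj) (Ne.symm hji))
        (fun h => absurd (Finset.mem_range.mpr hi) h)
    have hZY : Z * Y i = Y i * Y i := by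
      rw [hZ, Finset.sum_mul]
      have h0 : ∀ j ∈ Finset.range d, j ≠ i → Y j * Y i = 0 :=
        fun j hj hji => hprod0 j (Finset.mem_range.mp hj) i hi hji
      rw [Finset.sum_eq_single i h0 (fun h => absurd (Finset.mem_range.mpr hi) h)]
    exact ⟨hYZ.symm, by rw [hYZ, hZY]⟩
  · -- Part 3: centrality
    rw [Subring.mem_center_iff]
    intro a
    obtain ⟨b, rfl⟩ := RingQuot.mkRingHom_surjective (monomialRel k T) a
    rw [← hmk]
    induction b using FreeAlgebra.induction with
    | grade0 r =>
        have h1 : mk (algebraMap k (FreeAlgebra k X) r)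
            = algebraMap k (MonomialAlgebra k T) r := by
          rw [hmk, ← RingQuot.mkAlgHom_coe k (monomialRel k T)]
          exact (RingQuot.mkAlgHom k (monomialRel k T)).commutes r
        rw [h1]
        exact Algebra.commutes r Z
    | add a b ha hb =>
        rw [map_add, add_mul, mul_add, ha, hb]
    | mul a b ha hb =>
        rw [map_mul, mul_assoc, hb, ← mul_assoc, ha, mul_assoc]
    | grade1 x =>
        have hiota : FreeAlgebra.ι k x = wordToAlg k [x] := by simp [wordToAlg]
        -- the single-letter word as a factor of length 1
        have hone : ∀ m : ℕ, FactorAt T m 1 = [T m] := by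
          intro m; simp [FactorAt, List.range_succ]
        -- right multiplication terms
        have hx1 : ∀ j, j < d → mk (wordToAlg k (FactorAt T j d ++ [x]))
            = if T j = x then mk (wordToAlg k (FactorAt T j (d + 1))) else 0 := by
          intro j hj
          split_ifs with h
          · congr 1
            rw [factorAt_append, hone, hper j, h]
          · apply hzero
            rintro ⟨m, hm⟩
            simp only [OccursAt, List.length_append, factorAt_length, List.length_cons,
              List.length_nil, Nat.zero_add] at hm
            rw [factorAt_append, hone] at hm
            obtain ⟨h1, h2⟩ := List.append_inj hm (by rw [factorAt_length, factorAt_length])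
            have e1 : m % d = j := hmodeq m j hj h1
            have e2 : T (m + d) = x := by injection h2
            apply h
            rw [← e1, ← T_mod hper m, ← hper m, e2]
        -- left multiplication terms
        have hx2 : ∀ j, j < d → mk (wordToAlg k ([x] ++ FactorAt T ((j + 1) % d) d))
            = if T j = x then mk (wordToAlg k (FactorAt T j (d + 1))) else 0 := by
          intro j hj
          split_ifs with h
          · congr 1
            rw [show d + 1 = 1 + d by omega, factorAt_append, hone, h,
              factorAt_mod hper (j + 1) d]
          · apply hzero
            rintro ⟨m, hm⟩
            simp only [OccursAt, List.length_append, factorAt_length, List.length_cons,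
              List.length_nil, Nat.zero_add] at hm
            rw [factorAt_append, hone] at hm
            obtain ⟨h1, h2⟩ := List.append_inj hm rfl
            have e2 : (m + 1) % d = (j + 1) % d := by
              refine shifts_distinct hd hper hmin (Nat.mod_lt _ (by omega))
                (Nat.mod_lt _ (by omega)) ?_
              rw [← factorAt_mod hper (m + 1) d, h2]
            have e3 : m % d = j := by
              have h5 : m ≡ j [MOD d] := Nat.ModEq.add_right_cancel' 1 e2
              simpa [Nat.ModEq, Nat.mod_eq_of_lt hj] using h5
            have e4 : T m = x := by simpa using h1
            apply h
            rw [← e3, ← T_mod hper m, e4]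
        rw [hiota, hZ, Finset.mul_sum, Finset.sum_mul]
        have hL : ∀ j ∈ Finset.range d, mk (wordToAlg k [x]) * Y j
            = mk (wordToAlg k ([x] ++ FactorAt T j d)) := by
          intro j _
          rw [hY j, hWmul]
        have hR : ∀ j ∈ Finset.range d, Y j * mk (wordToAlg k [x])
            = if T j = x then mk (wordToAlg k (FactorAt T j (d + 1))) else 0 := by
          intro j hj
          rw [hY j, hWmul, hx1 j (Finset.mem_range.mp hj)]
        rw [Finset.sum_congr rfl hL, Finset.sum_congr rfl hR]
        refine Finset.sum_nbij' (fun a => (a + (d - 1)) % d) (fun b => (b + 1) % d)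
          ?_ ?_ ?_ ?_ ?_
        · intro a _
          exact Finset.mem_range.mpr (Nat.mod_lt _ (by omega))
        · intro b _
          exact Finset.mem_range.mpr (Nat.mod_lt _ (by omega))
        · intro a ha
          exact pred_succ d a hd (Finset.mem_range.mp ha)
        · intro b hb
          exact succ_pred d b hd (Finset.mem_range.mp hb)
        · intro a ha
          have h1 := hx2 ((a + (d - 1)) % d) (Nat.mod_lt _ (by omega))
          rw [pred_succ d a hd (Finset.mem_range.mp ha)] at h1
          exact h1
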